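/- (Main theorem, quantitative asymptotic regularity) Let T be a κ-strict pseudo-contraction on a nonempty convex subset C of a Hilbert space, (λₙ) a sequence in (κ,1) with θ : ℕ → ℕ a rate of divergence for ∑(λₙ-κ)(1-λₙ) (i.e., ∑_{k=0}^{θ(n)} (λ_k-κ)(1-λ_k) ≥ n for all n). Let x ∈ C, b > 0 with ‖x - Tx‖ ≤ b, and assume T has approximate fixed points in a b-neighborhood of x. Then for all ε > 0 and all n ≥ θ(⌈b²/ε²⌉), ‖xₙ - Txₙ‖ < ε; in particular ‖xₙ - Txₙ‖ → 0. -/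

import Mathlib

/-!
Write `dₖ = ‖xₖ - T xₖ‖` and `wₖ = (λₖ - κ)(1 - λₖ)`. The residuals `dₖ` are nonincreasing, and
for a fixed point `p` the Fejér estimate `‖xₙ - p‖² + ∑_{k<n} wₖ dₖ² ≤ ‖x₀ - p‖²` holds; for an
approximate fixed point `p` it holds up to an error linear in `‖p - T p‖`.

If `dₙ ≥ ε` for some `n ≥ m = θ N`, then `∑_{k≤m} wₖ dₖ² ≥ ε² N ≥ b²`. This forces `x_{m+1}` to
be a limit of approximate fixed points that lie within `b` of `x₀`, hence (as `T` is Lipschitz on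
`C`) a fixed point `z` with `‖x₀ - z‖ ≤ b`. The Fejér estimate for `z` then makes every inequality
an equality: all `dₖ = ε`, the residual vectors `xₖ - T xₖ` coincide, so `‖x₀ - z‖ = ε ∑(1 - λₖ)`
and `(∑(1 - λₖ))² = ∑ wₖ ≥ N ≥ 1`. This is impossible, because
`∑ wₖ = (1 - κ) ∑(1 - λₖ) - ∑(1 - λₖ)²` makes `∑(1 - λₖ) < 1 - κ ≤ 1`.
-/

open Set Finset

theorem sum_weights_lt_one {ι : Type*} {s : Finset ι} (hs : s.Nonempty) {κ : ℝ} (hκ : 0 ≤ κ)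
    {lam : ι → ℝ} (hlam : ∀ i ∈ s, lam i < 1)
    (h : (∑ i ∈ s, (1 - lam i)) ^ 2 = ∑ i ∈ s, (lam i - κ) * (1 - lam i)) :
    ∑ i ∈ s, (lam i - κ) * (1 - lam i) < 1 := by
  set A := ∑ i ∈ s, (1 - lam i)
  have hA : 0 < A := Finset.sum_pos (fun i hi => sub_pos.2 (hlam i hi)) hs
  have hQ : 0 < ∑ i ∈ s, (1 - lam i) ^ 2 :=
    Finset.sum_pos (fun i hi => pow_pos (sub_pos.2 (hlam i hi)) 2) hs
  have hsplit :
      ∑ i ∈ s, (lam i - κ) * (1 - lam i) = (1 - κ) * A - ∑ i ∈ s, (1 - lam i) ^ 2 := by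
    rw [Finset.mul_sum, ← Finset.sum_sub_distrib]
    exact Finset.sum_congr rfl fun i _ => by ring
  have hA1 : A < 1 := by nlinarith
  nlinarith

theorem eq_of_sum_mul_le_mul_sum {ι : Type*} {s : Finset ι} {w f : ι → ℝ} {c : ℝ}
    (hw : ∀ i ∈ s, 0 < w i) (hf : ∀ i ∈ s, c ≤ f i) (h : ∑ i ∈ s, w i * f i ≤ c * ∑ i ∈ s, w i) :
    ∀ i ∈ s, f i = c := by
  have hle : ∀ i ∈ s, w i * c ≤ w i * f i := fun i hi => by gcongr; exacts [(hw i hi).le, hf i hi]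
  have heq := (Finset.sum_eq_sum_iff_of_le hle).1
    (le_antisymm (Finset.sum_le_sum hle) (by rwa [← Finset.sum_mul, mul_comm]))
  exact fun i hi => (mul_left_cancel₀ (hw i hi).ne' (heq i hi)).symm

section StrictPseudoContraction

variable {H : Type*} [NormedAddCommGroup H]

def IsStrictPseudoContraction (C : Set H) (κ : ℝ) (T : H → H) : Prop :=
  ∀ u ∈ C, ∀ v ∈ C, ‖T u - T v‖ ^ 2 ≤ ‖u - v‖ ^ 2 + κ * ‖(u - T u) - (v - T v)‖ ^ 2

namespace IsStrictPseudoContraction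

variable {C : Set H} {κ : ℝ} {T : H → H}

theorem lipschitz (hT : IsStrictPseudoContraction C κ T) (hκ : 0 ≤ κ) {u v : H}
    (hu : u ∈ C) (hv : v ∈ C) : (1 - κ) * ‖T u - T v‖ ≤ (1 + κ) * ‖u - v‖ := by
  have hres : ‖(u - T u) - (v - T v)‖ ≤ ‖u - v‖ + ‖T u - T v‖ := by
    rw [show (u - T u) - (v - T v) = (u - v) - (T u - T v) by abel]
    exact norm_sub_le _ _
  have hsq : ‖T u - T v‖ ^ 2 ≤ ‖u - v‖ ^ 2 + κ * (‖u - v‖ + ‖T u - T v‖) ^ 2 :=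
    (hT u hu v hv).trans (by gcongr)
  -- `hsq` says `((1 - κ) t - (1 + κ) s) (t + s) ≤ 0` for `t = ‖T u - T v‖`, `s = ‖u - v‖`
  rcases (add_nonneg (norm_nonneg (u - v)) (norm_nonneg (T u - T v))).eq_or_lt with h0 | h0
  · nlinarith [norm_nonneg (u - v), norm_nonneg (T u - T v)]
  · nlinarith

theorem norm_apply_sub_sq_le (hT : IsStrictPseudoContraction C κ T) (hκ0 : 0 ≤ κ)
    (hκ1 : κ ≤ 1) {u p : H} (hu : u ∈ C) (hp : p ∈ C) :
    ‖T u - p‖ ^ 2 ≤ ‖u - p‖ ^ 2 + κ * ‖u - T u‖ ^ 2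
      + 4 * ‖p - T p‖ * (‖u - p‖ + ‖u - T u‖ + ‖p - T p‖) := by
  have hTup : ‖T u - p‖ ≤ ‖T u - T p‖ + ‖p - T p‖ := by
    simpa [norm_sub_rev p] using norm_add_le (T u - T p) (T p - p)
  have hres : ‖(u - T u) - (p - T p)‖ ≤ ‖u - T u‖ + ‖p - T p‖ := norm_sub_le _ _
  have hTT : ‖T u - T p‖ ≤ ‖u - T u‖ + ‖u - p‖ + ‖p - T p‖ := by
    simpa [norm_sub_rev u] using norm_add₃_le (a := T u - u) (b := u - p) (c := p - T p)
  have hsq : ‖T u - T p‖ ^ 2 ≤ ‖u - p‖ ^ 2 + κ * (‖u - T u‖ + ‖p - T p‖) ^ 2 :=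
    (hT u hu p hp).trans (by gcongr)
  have hTup2 : ‖T u - p‖ ^ 2 ≤ (‖T u - T p‖ + ‖p - T p‖) ^ 2 := by gcongr
  have hη := norm_nonneg (p - T p)
  nlinarith [mul_le_mul_of_nonneg_right hTT hη,
    mul_nonneg (sub_nonneg.2 hκ1) (mul_nonneg hη (add_nonneg (norm_nonneg (u - T u)) hη)),
    mul_nonneg (sub_nonneg.2 hκ1) (mul_nonneg hη (norm_nonneg (u - T u))),
    mul_nonneg hη (norm_nonneg (u - p)), mul_nonneg hη (norm_nonneg (u - T u))]

theorem apply_eq_of_forall_approxFixed_near (hT : IsStrictPseudoContraction C κ T)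
    (hκ0 : 0 ≤ κ) (hκ1 : κ < 1) {z : H} (hz : z ∈ C)
    (h : ∀ η > 0, ∃ p ∈ C, ‖z - p‖ < η ∧ ‖p - T p‖ < η) : T z = z := by
  have hle : (1 - κ) * ‖z - T z‖ ≤ 0 := by
    refine le_of_forall_pos_le_add fun ε hε => ?_
    obtain ⟨p, hp, hzp, hpT⟩ := h (ε / 3) (by positivity)
    have htri : ‖z - T z‖ ≤ ‖z - p‖ + ‖p - T p‖ + ‖T p - T z‖ := by
      simpa using norm_add₃_le (a := z - p) (b := p - T p) (c := T p - T z)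
    have hlip := hT.lipschitz hκ0 hp hz
    rw [norm_sub_rev p] at hlip
    nlinarith
  have hpos : 0 < 1 - κ := sub_pos.2 hκ1
  rw [eq_comm, ← sub_eq_zero, ← norm_eq_zero]
  exact le_antisymm (nonpos_of_mul_nonpos_right hle hpos) (norm_nonneg _)

end IsStrictPseudoContraction

variable [InnerProductSpace ℝ H]

theorem norm_smul_add_one_sub_smul_sq (u v : H) (t : ℝ) :
    ‖t • u + (1 - t) • v‖ ^ 2 =
      t * ‖u‖ ^ 2 + (1 - t) * ‖v‖ ^ 2 - t * (1 - t) * ‖u - v‖ ^ 2 := by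
  rw [norm_add_sq_real, norm_sub_sq_real, norm_smul, norm_smul, real_inner_smul_left,
    real_inner_smul_right, Real.norm_eq_abs, Real.norm_eq_abs, mul_pow, mul_pow, sq_abs, sq_abs]
  ring

namespace IsStrictPseudoContraction

variable {C : Set H} {κ : ℝ} {T : H → H}

theorem residual_mann_step (hT : IsStrictPseudoContraction C κ T) {u u' : H} {lam : ℝ}
    (hu : u ∈ C) (hu' : u' ∈ C) (hstep : u' = lam • u + (1 - lam) • T u) :
    (1 - lam) * ‖u' - T u'‖ ^ 2 + (lam - κ) * ‖(u - T u) - (u' - T u')‖ ^ 2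
      ≤ (1 - lam) * ‖u - T u‖ ^ 2 := by
  have h := hT u hu u' hu'
  have hmove : u - u' = (1 - lam) • (u - T u) := by rw [hstep]; module
  rw [hmove, show T u - T u' = (1 - lam) • (u - T u) - ((u - T u) - (u' - T u')) by
    rw [← hmove]; abel] at h
  nth_rw 1 [show u' - T u' = (u - T u) - ((u - T u) - (u' - T u')) by abel]
  rw [norm_sub_sq_real]
  rw [norm_sub_sq_real, norm_smul, real_inner_smul_left, Real.norm_eq_abs, mul_pow, sq_abs] at h
  nlinarith

theorem norm_mann_step_sub_sq_le (hT : IsStrictPseudoContraction C κ T) (hκ0 : 0 ≤ κ)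
    (hκ1 : κ ≤ 1) {u u' p : H} {lam : ℝ} (hlam0 : 0 ≤ lam) (hlam1 : lam ≤ 1) (hu : u ∈ C)
    (hp : p ∈ C) (hstep : u' = lam • u + (1 - lam) • T u) :
    ‖u' - p‖ ^ 2 ≤ ‖u - p‖ ^ 2 - (lam - κ) * (1 - lam) * ‖u - T u‖ ^ 2
      + 4 * ‖p - T p‖ * (‖u - p‖ + ‖u - T u‖ + ‖p - T p‖) := by
  have hid : ‖u' - p‖ ^ 2
      = lam * ‖u - p‖ ^ 2 + (1 - lam) * ‖T u - p‖ ^ 2 - lam * (1 - lam) * ‖u - T u‖ ^ 2 := by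
    rw [show u' - p = lam • (u - p) + (1 - lam) • (T u - p) by rw [hstep]; module,
      norm_smul_add_one_sub_smul_sq, show (u - p) - (T u - p) = u - T u by abel]
  have herr := mul_le_mul_of_nonneg_left (hT.norm_apply_sub_sq_le hκ0 hκ1 hu hp)
    (sub_nonneg.2 hlam1)
  have hE : 0 ≤ 4 * ‖p - T p‖ * (‖u - p‖ + ‖u - T u‖ + ‖p - T p‖) := by positivity
  nlinarith [mul_nonneg hlam0 hE]

end IsStrictPseudoContraction

section MannIteration

variable {C : Set H} {κ : ℝ} {T : H → H} {lam : ℕ → ℝ} {x : ℕ → H}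

theorem mann_mem (hC : Convex ℝ C) (hTC : MapsTo T C C) (hlam : ∀ n, lam n ∈ Icc (0 : ℝ) 1)
    (hx0 : x 0 ∈ C) (hx : ∀ n, x (n + 1) = lam n • x n + (1 - lam n) • T (x n)) (n : ℕ) :
    x n ∈ C := by
  induction n with
  | zero => exact hx0
  | succ n ih =>
    rw [hx n]
    exact hC ih (hTC ih) (hlam n).1 (sub_nonneg.2 (hlam n).2) (by ring)

theorem mann_sub_eq_sum_smul (hx : ∀ n, x (n + 1) = lam n • x n + (1 - lam n) • T (x n))
    {n : ℕ} (hr : ∀ k < n, x k - T (x k) = x 0 - T (x 0)) :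
    x 0 - x n = (∑ k ∈ range n, (1 - lam k)) • (x 0 - T (x 0)) := by
  rw [← Finset.sum_range_sub' x n, Finset.sum_smul]
  refine Finset.sum_congr rfl fun k hk => ?_
  rw [← hr k (Finset.mem_range.1 hk), hx k]
  module

namespace IsStrictPseudoContraction

theorem mann_residual_antitone (hT : IsStrictPseudoContraction C κ T)
    (hlam : ∀ n, lam n ∈ Ioo κ 1) (hxC : ∀ n, x n ∈ C)
    (hx : ∀ n, x (n + 1) = lam n • x n + (1 - lam n) • T (x n)) :
    Antitone fun n => ‖x n - T (x n)‖ := by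
  refine antitone_nat_of_succ_le fun n => ?_
  have h := hT.residual_mann_step (hxC n) (hxC (n + 1)) (hx n)
  have hΔ : 0 ≤ (lam n - κ) * ‖(x n - T (x n)) - (x (n + 1) - T (x (n + 1)))‖ ^ 2 :=
    mul_nonneg (sub_nonneg.2 (hlam n).1.le) (sq_nonneg _)
  have hsq : ‖x (n + 1) - T (x (n + 1))‖ ^ 2 ≤ ‖x n - T (x n)‖ ^ 2 :=
    le_of_mul_le_mul_left (by linarith) (sub_pos.2 (hlam n).2)
  exact (pow_le_pow_iff_left₀ (norm_nonneg _) (norm_nonneg _) two_ne_zero).1 hsq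

theorem mann_residual_eq_of_norm_eq (hT : IsStrictPseudoContraction C κ T)
    (hlam : ∀ n, lam n ∈ Ioo κ 1) (hxC : ∀ n, x n ∈ C)
    (hx : ∀ n, x (n + 1) = lam n • x n + (1 - lam n) • T (x n)) {m : ℕ} {ε : ℝ}
    (hd : ∀ k ≤ m, ‖x k - T (x k)‖ = ε) :
    ∀ k ≤ m, x k - T (x k) = x 0 - T (x 0) := by
  intro k hk
  induction k with
  | zero => rfl
  | succ k ih =>
    have h := hT.residual_mann_step (hxC k) (hxC (k + 1)) (hx k)
    rw [hd k (by omega), hd (k + 1) hk] at h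
    have hΔ : ‖(x k - T (x k)) - (x (k + 1) - T (x (k + 1)))‖ ^ 2 ≤ 0 :=
      nonpos_of_mul_nonpos_right (by linarith) (sub_pos.2 (hlam k).1)
    rw [← ih (by omega), eq_comm, ← sub_eq_zero, ← norm_eq_zero]
    exact pow_eq_zero_iff two_ne_zero |>.1 (le_antisymm hΔ (sq_nonneg _))

theorem mann_fejer_sum (hT : IsStrictPseudoContraction C κ T) (hκ0 : 0 ≤ κ) (hκ1 : κ ≤ 1)
    (hlam : ∀ n, lam n ∈ Ioo κ 1) (hxC : ∀ n, x n ∈ C)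
    (hx : ∀ n, x (n + 1) = lam n • x n + (1 - lam n) • T (x n)) {p : H} (hp : p ∈ C) (n : ℕ) :
    ‖x n - p‖ ^ 2 + ∑ k ∈ range n, (lam k - κ) * (1 - lam k) * ‖x k - T (x k)‖ ^ 2
      ≤ ‖x 0 - p‖ ^ 2
        + 4 * ‖p - T p‖ * ∑ k ∈ range n, (‖x k - p‖ + ‖x k - T (x k)‖ + ‖p - T p‖) := by
  induction n with
  | zero => simp
  | succ n ih =>
    have h := hT.norm_mann_step_sub_sq_le hκ0 hκ1 (hκ0.trans (hlam n).1.le) (hlam n).2.le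
      (hxC n) hp (hx n)
    rw [sum_range_succ, sum_range_succ, mul_add]
    linarith

theorem mann_exists_approxFixed_near (hT : IsStrictPseudoContraction C κ T) (hκ0 : 0 ≤ κ)
    (hκ1 : κ ≤ 1) (hlam : ∀ n, lam n ∈ Ioo κ 1) (hxC : ∀ n, x n ∈ C)
    (hx : ∀ n, x (n + 1) = lam n • x n + (1 - lam n) • T (x n)) {b : ℝ} {n : ℕ}
    (hafp : ∀ δ > (0 : ℝ), ∃ y ∈ C, ‖x 0 - y‖ ≤ b ∧ ‖y - T y‖ < δ)
    (hsum : b ^ 2 ≤ ∑ k ∈ range n, (lam k - κ) * (1 - lam k) * ‖x k - T (x k)‖ ^ 2) :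
    ∀ η > 0, ∃ p ∈ C, ‖x 0 - p‖ ≤ b ∧ ‖x n - p‖ < η ∧ ‖p - T p‖ < η := by
  set K := 4 * ∑ k ∈ range n, (‖x k - x 0‖ + b + ‖x k - T (x k)‖ + 1)
  have hnear : ∀ p ∈ C, ‖x 0 - p‖ ≤ b → ‖p - T p‖ ≤ 1 → ‖x n - p‖ ^ 2 ≤ ‖p - T p‖ * K := by
    intro p hp hpb hp1
    have hfej := hT.mann_fejer_sum hκ0 hκ1 hlam hxC hx hp n
    have herr : 4 * ‖p - T p‖ * ∑ k ∈ range n, (‖x k - p‖ + ‖x k - T (x k)‖ + ‖p - T p‖)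
        ≤ ‖p - T p‖ * K := by
      rw [mul_comm 4, mul_assoc]
      refine mul_le_mul_of_nonneg_left (mul_le_mul_of_nonneg_left
        (Finset.sum_le_sum fun k _ => ?_) zero_le_four) (norm_nonneg _)
      have := norm_sub_le_norm_sub_add_norm_sub (x k) (x 0) p
      linarith
    nlinarith [norm_nonneg (x 0 - p)]
  intro η hη
  have hb : 0 ≤ b := by
    obtain ⟨p, -, hpb, -⟩ := hafp 1 one_pos
    exact (norm_nonneg _).trans hpb
  have hK : 0 < K + 1 := by
    have : 0 ≤ K := mul_nonneg zero_le_four (Finset.sum_nonneg fun k _ =>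
      add_nonneg (add_nonneg (add_nonneg (norm_nonneg _) hb) (norm_nonneg _)) zero_le_one)
    linarith
  obtain ⟨p, hp, hpb, hpT⟩ := hafp (min 1 (min η (η ^ 2 / (K + 1)))) (by positivity)
  have hp1 : ‖p - T p‖ < 1 := hpT.trans_le (min_le_left _ _)
  have hpη : ‖p - T p‖ < η := hpT.trans_le ((min_le_right _ _).trans (min_le_left _ _))
  have hpK : ‖p - T p‖ * (K + 1) < η ^ 2 :=
    (lt_div_iff₀ hK).1 (hpT.trans_le ((min_le_right _ _).trans (min_le_right _ _)))
  have hsq : ‖x n - p‖ ^ 2 < η ^ 2 := by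
    nlinarith [hnear p hp hpb hp1.le, norm_nonneg (p - T p)]
  exact ⟨p, hp, hpb, (pow_lt_pow_iff_left₀ (norm_nonneg _) hη.le two_ne_zero).1 hsq, hpη⟩

theorem mann_apply_eq_and_norm_le_of_sq_le_sum (hT : IsStrictPseudoContraction C κ T)
    (hκ0 : 0 ≤ κ) (hκ1 : κ < 1) (hlam : ∀ n, lam n ∈ Ioo κ 1) (hxC : ∀ n, x n ∈ C)
    (hx : ∀ n, x (n + 1) = lam n • x n + (1 - lam n) • T (x n)) {b : ℝ} {n : ℕ}
    (hafp : ∀ δ > (0 : ℝ), ∃ y ∈ C, ‖x 0 - y‖ ≤ b ∧ ‖y - T y‖ < δ)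
    (hsum : b ^ 2 ≤ ∑ k ∈ range n, (lam k - κ) * (1 - lam k) * ‖x k - T (x k)‖ ^ 2) :
    T (x n) = x n ∧ ‖x 0 - x n‖ ≤ b := by
  have hnear := hT.mann_exists_approxFixed_near hκ0 hκ1.le hlam hxC hx hafp hsum
  refine ⟨hT.apply_eq_of_forall_approxFixed_near hκ0 hκ1 (hxC n) fun η hη => ?_,
    le_of_forall_pos_le_add fun η hη => ?_⟩
  · obtain ⟨p, hp, -, hnp, hpT⟩ := hnear η hη
    exact ⟨p, hp, hnp, hpT⟩
  · obtain ⟨p, -, hpb, hnp, -⟩ := hnear η hη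
    linarith [norm_sub_le_norm_sub_add_norm_sub (x 0) p (x n), norm_sub_rev p (x n)]

theorem mann_residual_lt (hT : IsStrictPseudoContraction C κ T) (hκ0 : 0 ≤ κ) (hκ1 : κ < 1)
    (hlam : ∀ n, lam n ∈ Ioo κ 1) (hxC : ∀ n, x n ∈ C)
    (hx : ∀ n, x (n + 1) = lam n • x n + (1 - lam n) • T (x n)) {b ε : ℝ} {m n : ℕ}
    (hafp : ∀ δ > (0 : ℝ), ∃ y ∈ C, ‖x 0 - y‖ ≤ b ∧ ‖y - T y‖ < δ) (hε : 0 < ε)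
    (hS : 1 ≤ ∑ k ∈ range (m + 1), (lam k - κ) * (1 - lam k))
    (hSb : b ^ 2 ≤ ε ^ 2 * ∑ k ∈ range (m + 1), (lam k - κ) * (1 - lam k)) (hmn : m ≤ n) :
    ‖x n - T (x n)‖ < ε := by
  by_contra! hn
  have hw : ∀ k ∈ range (m + 1), 0 < (lam k - κ) * (1 - lam k) := fun k _ =>
    mul_pos (sub_pos.2 (hlam k).1) (sub_pos.2 (hlam k).2)
  have hge : ∀ k ∈ range (m + 1), ε ^ 2 ≤ ‖x k - T (x k)‖ ^ 2 := fun k hk =>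
    pow_le_pow_left₀ hε.le (hn.trans (hT.mann_residual_antitone hlam hxC hx
      (by have := Finset.mem_range.1 hk; omega))) 2
  have hlow : ε ^ 2 * ∑ k ∈ range (m + 1), (lam k - κ) * (1 - lam k)
      ≤ ∑ k ∈ range (m + 1), (lam k - κ) * (1 - lam k) * ‖x k - T (x k)‖ ^ 2 := by
    rw [Finset.mul_sum]
    exact Finset.sum_le_sum fun k hk => by
      rw [mul_comm]; exact mul_le_mul_of_nonneg_left (hge k hk) (hw k hk).le
  obtain ⟨hfix, hzb⟩ :=
    hT.mann_apply_eq_and_norm_le_of_sq_le_sum hκ0 hκ1 hlam hxC hx hafp (hSb.trans hlow)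
  have hfej := hT.mann_fejer_sum hκ0 hκ1.le hlam hxC hx (hxC (m + 1)) (m + 1)
  simp only [hfix, sub_self, norm_zero] at hfej
  -- `b² ≤ ε² ∑ wₖ ≤ ∑ wₖ dₖ² ≤ ‖x₀ - x_{m+1}‖² ≤ b²` is a chain of equalities
  have hzb2 : ‖x 0 - x (m + 1)‖ ^ 2 ≤ b ^ 2 := pow_le_pow_left₀ (norm_nonneg _) hzb 2
  have hd : ∀ k ≤ m, ‖x k - T (x k)‖ = ε := fun k hk =>
    (pow_left_inj₀ (norm_nonneg _) hε.le two_ne_zero).1 <|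
      eq_of_sum_mul_le_mul_sum hw hge (by linarith) k (Finset.mem_range.2 (by omega))
  have hsub := mann_sub_eq_sum_smul hx (n := m + 1) fun k hk =>
    hT.mann_residual_eq_of_norm_eq hlam hxC hx hd k (by omega)
  rw [hsub, norm_smul, Real.norm_of_nonneg (Finset.sum_nonneg fun k _ =>
    (sub_pos.2 (hlam k).2).le), hd 0 (Nat.zero_le m)] at hfej hzb2
  have hA : (∑ k ∈ range (m + 1), (1 - lam k)) ^ 2
      = ∑ k ∈ range (m + 1), (lam k - κ) * (1 - lam k) :=
    mul_right_cancel₀ (pow_pos hε 2).ne' (by nlinarith)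
  exact (sum_weights_lt_one nonempty_range_add_one hκ0 (fun k _ => (hlam k).2) hA).not_ge hS

end IsStrictPseudoContraction

end MannIteration

end StrictPseudoContraction

theorem stmt_8_general {H : Type*} [NormedAddCommGroup H] [InnerProductSpace ℝ H]
    (C : Set H) (hCconv : Convex ℝ C)
    (κ : ℝ) (hκ0 : 0 ≤ κ) (hκ1 : κ < 1)
    (T : H → H) (hTmap : Set.MapsTo T C C)
    (hT : ∀ u ∈ C, ∀ v ∈ C,
      ‖T u - T v‖ ^ 2 ≤ ‖u - v‖ ^ 2 + κ * ‖(u - T u) - (v - T v)‖ ^ 2)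
    (lam : ℕ → ℝ) (hlam : ∀ n, lam n ∈ Set.Ioo κ 1)
    (θ : ℕ → ℕ)
    (hθ : ∀ n : ℕ, (n : ℝ) ≤ ∑ k ∈ Finset.range (θ n + 1), (lam k - κ) * (1 - lam k))
    (x : ℕ → H) (hx0 : x 0 ∈ C)
    (hxrec : ∀ n, x (n + 1) = lam n • x n + (1 - lam n) • T (x n))
    (b : ℝ) (hb : 0 < b)
    (hafp : ∀ δ > (0:ℝ), ∃ y ∈ C, ‖x 0 - y‖ ≤ b ∧ ‖y - T y‖ < δ) :
    (∀ ε > (0:ℝ), ∀ n : ℕ, θ ⌈b ^ 2 / ε ^ 2⌉₊ ≤ n → ‖x n - T (x n)‖ < ε) ∧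
      Filter.Tendsto (fun n => ‖x n - T (x n)‖) Filter.atTop (nhds 0) := by
  have hxC :=
    mann_mem hCconv hTmap (fun n => ⟨hκ0.trans (hlam n).1.le, (hlam n).2.le⟩) hx0 hxrec
  have hrate : ∀ ε > (0:ℝ), ∀ n : ℕ, θ ⌈b ^ 2 / ε ^ 2⌉₊ ≤ n → ‖x n - T (x n)‖ < ε := by
    intro ε hε n hn
    have hN : (1 : ℝ) ≤ ⌈b ^ 2 / ε ^ 2⌉₊ := by
      exact_mod_cast Nat.one_le_ceil_iff.2 (by positivity)
    have hbN : b ^ 2 ≤ ε ^ 2 * ⌈b ^ 2 / ε ^ 2⌉₊ := by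
      rw [← div_le_iff₀' (by positivity)]
      exact Nat.le_ceil _
    have hθN := hθ ⌈b ^ 2 / ε ^ 2⌉₊
    exact IsStrictPseudoContraction.mann_residual_lt hT hκ0 hκ1 hlam hxC hxrec hafp hε
      (hN.trans hθN) (hbN.trans (by gcongr)) hn
  refine ⟨hrate, Metric.tendsto_atTop.2 fun ε hε => ⟨θ ⌈b ^ 2 / ε ^ 2⌉₊, fun n hn => ?_⟩⟩
  rw [Real.dist_eq, sub_zero, abs_of_nonneg (norm_nonneg _)]
  exact hrate ε hε n hn

theorem stmt_8 {H : Type*} [NormedAddCommGroup H] [InnerProductSpace ℝ H]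
    (C : Set H) (hCne : C.Nonempty) (hCconv : Convex ℝ C)
    (κ : ℝ) (hκ0 : 0 ≤ κ) (hκ1 : κ < 1)
    (T : H → H) (hTmap : Set.MapsTo T C C)
    (hT : ∀ u ∈ C, ∀ v ∈ C,
      ‖T u - T v‖ ^ 2 ≤ ‖u - v‖ ^ 2 + κ * ‖(u - T u) - (v - T v)‖ ^ 2)
    (lam : ℕ → ℝ) (hlam : ∀ n, lam n ∈ Set.Ioo κ 1)
    (θ : ℕ → ℕ)
    (hθ : ∀ n : ℕ, (n : ℝ) ≤ ∑ k ∈ Finset.range (θ n + 1), (lam k - κ) * (1 - lam k))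
    (x : ℕ → H) (hx0 : x 0 ∈ C)
    (hxrec : ∀ n, x (n + 1) = lam n • x n + (1 - lam n) • T (x n))
    (b : ℝ) (hb : 0 < b) (hxb : ‖x 0 - T (x 0)‖ ≤ b)
    (hafp : ∀ δ > (0:ℝ), ∃ y ∈ C, ‖x 0 - y‖ ≤ b ∧ ‖y - T y‖ < δ) :
    (∀ ε > (0:ℝ), ∀ n : ℕ, θ ⌈b ^ 2 / ε ^ 2⌉₊ ≤ n → ‖x n - T (x n)‖ < ε) ∧
      Filter.Tendsto (fun n => ‖x n - T (x n)‖) Filter.atTop (nhds 0) :=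
  stmt_8_general C hCconv κ hκ0 hκ1 T hTmap hT lam hlam θ hθ x hx0 hxrec b hb hafp
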